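/- arXiv:1308.6023 — 4 statements merged into one kernel-verified Lean document; each statement's English description precedes it below -/
import Mathlib

section
/- Let L be a Lie algebra over ℂ with countable basis and V a simple L-module. For any finite linearly independent set {v₁,...,vₙ} ⊂ V and any elements v₁',...,vₙ' ∈ V, there exists u ∈ U(L) such that u·vᵢ = vᵢ' for all i = 1,...,n. -/
/-!
A simple `U(L)`-module `V` is cyclic, so `dim V ≤ dim U(L) ≤ ℵ₀`, and by Schur's lemma
`End_{U(L)} V` is a division algebra embedding into `V` via `φ ↦ φ v₀`. A division algebra of
countable dimension over `ℂ` is `ℂ` itself (Dixmier): a transcendental element `x` would give the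
uncountably many linearly independent elements `(x - a)⁻¹`, computed in the field formed by the
double centralizer of `x`. Hence every `ℂ`-linear endomorphism of `V` commutes with
`End_{U(L)} V`, and the Jacobson density theorem realises it on any finite set by an element
of `U(L)`.
-/

universe u

open Cardinal

theorem LinearIndependent.exists_linearMap_apply_eq {K V W ι : Type*} [DivisionRing K]
    [AddCommGroup V] [Module K V] [AddCommGroup W] [Module K W] {v : ι → V}
    (hv : LinearIndependent K v) (w : ι → W) : ∃ f : V →ₗ[K] W, ∀ i, f (v i) = w i := by
  obtain ⟨f, hf⟩ := LinearMap.exists_extend (Finsupp.linearCombination K w ∘ₗ hv.repr)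
  refine ⟨f, fun i => ?_⟩
  have := LinearMap.congr_fun hf ⟨v i, Submodule.subset_span (Set.mem_range_self i)⟩
  rwa [LinearMap.comp_apply, LinearMap.comp_apply, hv.repr_eq_single i _ rfl,
    Finsupp.linearCombination_single, one_smul] at this

section DivisionRing

variable {F D : Type u} [Field F] [DivisionRing D] [Algebra F D]

theorem Subalgebra.isField_centralizer_centralizer_singleton (x : D) :
    IsField (centralizer F (centralizer F ({x} : Set D) : Set D)) where
  exists_pair_ne := ⟨0, 1, zero_ne_one⟩
  mul_comm a b := Subtype.ext <|
    Set.centralizer_centralizer_comm_of_comm (by simp) _ a.2 _ b.2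
  mul_inv_cancel {a} ha := ⟨⟨a⁻¹, Set.inv_mem_centralizer₀ a.2⟩,
    Subtype.ext (mul_inv_cancel₀ (Subtype.coe_injective.ne ha))⟩

theorem DivisionRing.isAlgebraic_of_rank_lt_card (h : Module.rank F D < #F) (x : D) :
    IsAlgebraic F x := by
  let K := Subalgebra.centralizer F (Subalgebra.centralizer F ({x} : Set D) : Set D)
  let : Field K := (Subalgebra.isField_centralizer_centralizer_singleton x).toField
  have hx : x ∈ K := Set.subset_centralizer_centralizer rfl
  by_contra hx'
  have htr : Transcendental F (⟨x, hx⟩ : K) :=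
    fun halg => hx' ((isAlgebraic_algHom_iff K.val Subtype.val_injective).2 halg)
  exact (htr.linearIndependent_sub_inv.map' K.val.toLinearMap
    (LinearMap.ker_eq_bot.2 Subtype.val_injective)).cardinal_le_rank.not_gt h

theorem DivisionRing.algebraMap_bijective_of_rank_lt_card [IsAlgClosed F]
    (h : Module.rank F D < #F) : Function.Bijective (algebraMap F D) :=
  haveI : Algebra.IsAlgebraic F D := ⟨isAlgebraic_of_rank_lt_card h⟩
  IsAlgClosed.algebraMap_bijective_of_isIntegral

end DivisionRing

namespace IsSimpleModule

variable {F A M : Type u} [Field F] [Ring A] [Algebra F A] [AddCommGroup M] [Module F M]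
  [Module A M] [IsScalarTower F A M] [IsSimpleModule A M]

variable (F A M) in
theorem rank_le_rank_ring : Module.rank F M ≤ Module.rank F A := by
  have := IsSimpleModule.nontrivial A M
  obtain ⟨m, hm⟩ := exists_ne (0 : M)
  exact LinearMap.rank_le_of_surjective ((LinearMap.toSpanSingleton A M m).restrictScalars F)
    (toSpanSingleton_surjective A hm)

variable (F A M) in
theorem rank_end_le : Module.rank F (Module.End A M) ≤ Module.rank F M := by
  have := IsSimpleModule.nontrivial A M
  obtain ⟨m, hm⟩ := exists_ne (0 : M)
  refine LinearMap.rank_le_of_injective (LinearMap.applyₗ' F m) <|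
    (injective_iff_map_eq_zero _).2 fun g hg => ?_
  by_contra hg0
  exact hm ((LinearMap.bijective_of_ne_zero hg0).injective (hg.trans g.map_zero.symm))

theorem algebraMap_end_bijective [IsAlgClosed F] (h : Module.rank F A < #F) :
    Function.Bijective (algebraMap F (Module.End A M)) := by
  classical
  exact DivisionRing.algebraMap_bijective_of_rank_lt_card
    (((rank_end_le F A M).trans (rank_le_rank_ring F A M)).trans_lt h)

theorem exists_smul_eq_of_linearIndependent [IsAlgClosed F] (h : Module.rank F A < #F)
    {ι : Type*} [Finite ι] {v : ι → M} (hv : LinearIndependent F v) (w : ι → M) :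
    ∃ a : A, ∀ i, a • v i = w i := by
  classical
  obtain ⟨f, hf⟩ := hv.exists_linearMap_apply_eq w
  let f' : Module.End (Module.End A M) M :=
    { f with
      map_smul' := fun g m => by
        obtain ⟨c, rfl⟩ := (algebraMap_end_bijective h).2 g
        exact f.map_smul c m }
  have := Fintype.ofFinite ι
  obtain ⟨a, ha⟩ := jacobson_density f' (Finset.univ.image v)
  exact ⟨a, fun i => (ha _ (Finset.mem_image_of_mem v (Finset.mem_univ i))).symm.trans (hf i)⟩

end IsSimpleModule

namespace UniversalEnvelopingAlgebra

open LieModule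

variable {R L : Type*} [CommRing R] [LieRing L] [LieAlgebra R L]
variable {M : Type*} [AddCommGroup M] [Module R M] [LieRingModule L M] [LieModule R L M]

noncomputable instance instModule : Module (UniversalEnvelopingAlgebra R L) M :=
  Module.compHom M (lift R (toEnd R L M)).toRingHom

theorem smul_def (a : UniversalEnvelopingAlgebra R L) (m : M) :
    a • m = lift R (toEnd R L M) a m :=
  rfl

instance : IsScalarTower R (UniversalEnvelopingAlgebra R L) M where
  smul_assoc r a m := by simp only [smul_def, map_smul, LinearMap.smul_apply]

noncomputable def _root_.Submodule.toLieSubmodule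
    (N : Submodule (UniversalEnvelopingAlgebra R L) M) : LieSubmodule R L M :=
  { N.restrictScalars R with
    lie_mem {x m} hm := by
      simpa [smul_def, lift_ι_apply] using N.smul_mem (ι R x) hm }

theorem _root_.Submodule.toLieSubmodule_eq_bot_iff
    {N : Submodule (UniversalEnvelopingAlgebra R L) M} : N.toLieSubmodule = ⊥ ↔ N = ⊥ :=
  (LieSubmodule.toSubmodule_eq_bot (N := N.toLieSubmodule)).symm.trans
    (Submodule.restrictScalars_eq_bot_iff R _ _)

theorem _root_.Submodule.toLieSubmodule_eq_top_iff
    {N : Submodule (UniversalEnvelopingAlgebra R L) M} : N.toLieSubmodule = ⊤ ↔ N = ⊤ :=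
  (LieSubmodule.toSubmodule_eq_top (N := N.toLieSubmodule)).symm.trans
    (Submodule.restrictScalars_eq_top_iff R _ _)

instance [IsSimpleOrder (LieSubmodule R L M)] :
    IsSimpleModule (UniversalEnvelopingAlgebra R L) M :=
  have := (LieSubmodule.nontrivial_iff R L M).1 inferInstance
  { eq_bot_or_eq_top N := (eq_bot_or_eq_top N.toLieSubmodule).imp
      Submodule.toLieSubmodule_eq_bot_iff.1 Submodule.toLieSubmodule_eq_top_iff.1 }

theorem rank_le_aleph0 [Nontrivial R] {ι : Type*} [Countable ι] (b : Module.Basis ι R L) :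
    Module.rank R (UniversalEnvelopingAlgebra R L) ≤ ℵ₀ := by
  have hsurj : Function.Surjective (mkAlgHom R L) := RingCon.mkₐ_surjective _
  refine (LinearMap.rank_le_of_surjective (mkAlgHom R L).toLinearMap hsurj).trans ?_
  have : Countable (FreeMonoid ι) := inferInstanceAs (Countable (List ι))
  rw [← lift_le_aleph0, ← b.tensorAlgebra.mk_eq_rank, lift_le_aleph0]
  exact mk_le_aleph0

end UniversalEnvelopingAlgebra

theorem stmt1 (L : Type) [LieRing L] [LieAlgebra ℂ L]
    (ι : Type) [Countable ι] (b : Module.Basis ι ℂ L)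
    (V : Type) [AddCommGroup V] [Module ℂ V] [LieRingModule L V] [LieModule ℂ L V]
    [IsSimpleOrder (LieSubmodule ℂ L V)]
    (n : ℕ) (v v' : Fin n → V) (hv : LinearIndependent ℂ v) :
    ∃ u : UniversalEnvelopingAlgebra ℂ L,
      ∀ i, (UniversalEnvelopingAlgebra.lift ℂ (LieModule.toEnd ℂ L V)) u (v i) = v' i := by
  have hrank : Module.rank ℂ (UniversalEnvelopingAlgebra ℂ L) < #ℂ :=
    (UniversalEnvelopingAlgebra.rank_le_aleph0 b).trans_lt (mk_complex ▸ aleph0_lt_continuum)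
  exact IsSimpleModule.exists_smul_eq_of_linearIndependent hrank hv v'
end

section
/- Let L be a Lie algebra over ℂ with countable basis, and V₁, V₂ L-modules. Suppose that for every finite subset S ⊂ V₂, V₁ is a simple module over the annihilator subalgebra ann_L(S) = {g ∈ L : g·s = 0 for all s ∈ S}. Then every L-submodule of V₁ ⊗ V₂ has the form V₁ ⊗ V₂' for some L-submodule V₂' of V₂. -/
/-!
Let `A_S ⊆ End_ℂ V₁` be the associative algebra generated by the action of `ann_L(S)`.
Since `V₁ = A_∅ v` for any `v ≠ 0` and `A_∅` is generated by the countably many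
`b i`, `V₁` has countable dimension. Dixmier's form of Schur's lemma then gives
`End_{A_S} V₁ = ℂ`: a transcendental endomorphism would embed `ℂ(X)`, whose elements
`(X - c)⁻¹` are uncountably many linearly independent vectors. By the Jacobson density
theorem, `A_S` acts on `V₁` as densely as all of `End_ℂ V₁`.

Now write `m ∈ M` as `∑ eᵢ ⊗ wᵢ` with `(eᵢ)` linearly independent and let `S = {wᵢ}`.
On `V₁ ⊗ span S` an element `g ∈ ann_L(S)` acts as `g ⊗ 1`, so `(p ⊗ 1) m ∈ M` for all
`p ∈ A_S`; choosing `p eᵢ = δᵢⱼ x` yields `x ⊗ wⱼ ∈ M`. Hence `M = V₁ ⊗ V₂'` with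
`V₂' = {w | V₁ ⊗ w ⊆ M}`.
-/

open scoped TensorProduct

/-- `V₁` is a simple module over the annihilator in `L` of the finite set `S ⊆ V₂`:
it is nonzero and has no nonzero proper subspaces invariant under every `g ∈ L`
annihilating all elements of `S`. -/
def SimpleOverAnn (L : Type) [LieRing L] [LieAlgebra ℂ L]
    (V₁ : Type) [AddCommGroup V₁] [Module ℂ V₁] [LieRingModule L V₁] [LieModule ℂ L V₁]
    (V₂ : Type) [AddCommGroup V₂] [Module ℂ V₂] [LieRingModule L V₂] [LieModule ℂ L V₂]
    (S : Finset V₂) : Prop :=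
  Nontrivial V₁ ∧
    ∀ W : Submodule ℂ V₁,
      (∀ g : L, (∀ s ∈ S, ⁅g, s⁆ = (0 : V₂)) → ∀ w ∈ W, ⁅g, w⁆ ∈ W) → W = ⊥ ∨ W = ⊤

universe u v w

open Cardinal

open Polynomial in
theorem Algebra.IsAlgebraic.of_rank_lt_cardinalMk {F : Type u} {D : Type v} [Field F]
    [DivisionRing D] [Algebra F D] (h : lift.{u} (Module.rank F D) < lift.{v} #F) :
    Algebra.IsAlgebraic F D := by
  refine ⟨fun φ => ?_⟩
  by_contra hφ
  -- A transcendental `φ` extends `aeval φ` to an embedding of `F(X)` into `D`.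
  let K := FractionRing F[X]
  let f : F[X] →+* D := (aeval φ).toRingHom
  have hf (p : nonZeroDivisors F[X]) : f p ≠ 0 := fun h0 =>
    hφ ⟨p, nonZeroDivisors.coe_ne_zero p, h0⟩
  let fS : nonZeroDivisors F[X] →* Dˣ :=
    { toFun := fun p => Units.mk0 (f p) (hf p)
      map_one' := by ext; simp
      map_mul' := fun p q => by ext; simp }
  let g : K →+* D := OreLocalization.universalHom f fS fun _ => rfl
  have hg (c : F) : g (algebraMap F K c) = algebraMap F D c := by
    rw [IsScalarTower.algebraMap_apply F F[X] K]
    exact (OreLocalization.universalHom_commutes f fS fun _ => rfl).trans (aeval_C φ c)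
  let gF : K →ₗ[F] D :=
    { toFun := g
      map_add' := g.map_add
      map_smul' := fun c x => by simp only [Algebra.smul_def, map_mul, hg, RingHom.id_apply] }
  have hX : Transcendental F (algebraMap F[X] K X) :=
    (transcendental_algebraMap_iff (IsFractionRing.injective F[X] K)).2 (transcendental_X F)
  have hK : #F ≤ Module.rank F K := hX.linearIndependent_sub_inv.cardinal_le_rank
  exact h.not_ge ((lift_le.2 hK).trans (gF.lift_rank_le_of_injective g.injective))

section SimpleModule

variable {F : Type u} {A : Type v} {V : Type w} [Field F] [Ring A] [Algebra F A]
  [AddCommGroup V] [Module F V] [Module A V] [IsScalarTower F A V]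

theorem IsSimpleModule.algebraMap_end_surjective [IsAlgClosed F] [IsSimpleModule A V]
    (h : lift.{u} (Module.rank F V) < lift.{w} #F) :
    Function.Surjective (algebraMap F (Module.End A V)) := by
  classical
  have : Nontrivial V := IsSimpleModule.nontrivial A V
  obtain ⟨v, hv⟩ := exists_ne (0 : V)
  let ev : Module.End A V →ₗ[F] V :=
    { toFun := fun ψ => ψ v, map_add' := fun _ _ => rfl, map_smul' := fun _ _ => rfl }
  have hev : Function.Injective ev := by
    refine (injective_iff_map_eq_zero ev).2 fun ψ hψ => ?_
    by_contra hne
    exact hv ((LinearMap.bijective_of_ne_zero hne).1 (hψ.trans ψ.map_zero.symm))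
  have : Algebra.IsAlgebraic F (Module.End A V) :=
    .of_rank_lt_cardinalMk ((lift_le.2 (ev.rank_le_of_injective hev)).trans_lt h)
  exact IsAlgClosed.algebraMap_bijective_of_isIntegral.2

theorem exists_smul_eq_of_algebraMap_end_surjective [IsSemisimpleModule A V]
    (hV : Function.Surjective (algebraMap F (Module.End A V))) (f : V →ₗ[F] V) (s : Finset V) :
    ∃ a : A, ∀ v ∈ s, a • v = f v := by
  let f' : Module.End (Module.End A V) V :=
    { toFun := f
      map_add' := f.map_add
      map_smul' := fun ψ v => by
        obtain ⟨c, rfl⟩ := hV ψ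
        simp }
  obtain ⟨a, ha⟩ := jacobson_density f' s
  exact ⟨a, fun v hv => (ha v hv).symm⟩

end SimpleModule

theorem isSimpleModule_adjoin {F V : Type*} [CommRing F] [AddCommGroup V] [Module F V]
    [Nontrivial V] (T : Set (Module.End F V))
    (h : ∀ W : Submodule F V, (∀ t ∈ T, ∀ w ∈ W, t w ∈ W) → W = ⊥ ∨ W = ⊤) :
    IsSimpleModule (Algebra.adjoin F T) V := by
  refine { eq_bot_or_eq_top := fun N => ?_ }
  rcases h (N.restrictScalars F) fun t ht w hw => N.smul_mem ⟨t, Algebra.subset_adjoin ht⟩ hw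
    with hbot | htop
  · exact Or.inl ((Submodule.restrictScalars_eq_bot_iff F _ V).1 hbot)
  · exact Or.inr ((Submodule.restrictScalars_eq_top_iff F _ V).1 htop)

theorem rank_le_aleph0_of_isSimpleModule_adjoin {F V : Type*} [CommRing F] [AddCommGroup V]
    [Module F V] {T : Set (Module.End F V)} (hT : T.Countable)
    [IsSimpleModule (Algebra.adjoin F T) V] : Module.rank F V ≤ ℵ₀ := by
  have : Nontrivial V := IsSimpleModule.nontrivial (Algebra.adjoin F T) V
  obtain ⟨v, hv⟩ := exists_ne (0 : V)
  let orbit := (LinearMap.toSpanSingleton (Algebra.adjoin F T) V v).restrictScalars F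
  calc Module.rank F V
      ≤ Module.rank F (Algebra.adjoin F T) :=
        orbit.rank_le_of_surjective (IsSimpleModule.toSpanSingleton_surjective _ hv)
    _ ≤ max #T ℵ₀ := Algebra.rank_adjoin_le T
    _ = ℵ₀ := max_eq_right hT.le_aleph0

theorem Submodule.le_comap_of_mem_adjoin {F B X : Type*} [CommRing F] [Ring B] [Algebra F B]
    [AddCommGroup X] [Module F X] (ρ : B →ₐ[F] Module.End F X) {T : Set B} {Q : Submodule F X}
    (hT : ∀ t ∈ T, Q ≤ Q.comap (ρ t)) {p : B} (hp : p ∈ Algebra.adjoin F T) :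
    Q ≤ Q.comap (ρ p) := by
  induction hp using Algebra.adjoin_induction with
  | mem t ht => exact hT t ht
  | algebraMap r => intro x hx; simpa [Module.algebraMap_end_apply] using Q.smul_mem r hx
  | add a b _ _ ha hb => intro x hx; simpa using Q.add_mem (ha hx) (hb hx)
  | mul a b _ _ ha hb => intro x hx; simpa using ha (hb hx)

section TensorLie

variable {R L V₁ V₂ : Type*} [CommRing R] [LieRing L] [LieAlgebra R L]
  [AddCommGroup V₁] [Module R V₁] [LieRingModule L V₁] [LieModule R L V₁]
  [AddCommGroup V₂] [LieRingModule L V₂]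

variable (R L V₁) in
def annActionAlgebra (S : Set V₂) : Subalgebra R (Module.End R V₁) :=
  Algebra.adjoin R (LieModule.toEnd R L V₁ '' {g | ∀ s ∈ S, ⁅g, s⁆ = 0})

theorem annActionAlgebra_empty {ι : Type*} (b : Module.Basis ι R L) :
    annActionAlgebra R L V₁ (∅ : Set V₂) =
      Algebra.adjoin R (Set.range (LieModule.toEnd R L V₁ ∘ b)) := by
  have h : LieModule.toEnd R L V₁ '' {g | ∀ s ∈ (∅ : Set V₂), ⁅g, s⁆ = 0} =
      (Submodule.span R (Set.range b)).map (LieModule.toEnd R L V₁ : L →ₗ[R] Module.End R V₁) := by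
    rw [b.span_eq, Submodule.map_top]
    ext
    simp
  rw [annActionAlgebra, h, Submodule.map_span, ← Set.range_comp, Algebra.adjoin_span]
  rfl

variable [Module R V₂] [LieModule R L V₂]

theorem rTensor_mem_span_image2_tmul (f : Module.End R V₁) {S : Set V₂} {z : V₁ ⊗[R] V₂}
    (hz : z ∈ Submodule.span R (Set.image2 (· ⊗ₜ[R] ·) Set.univ S)) :
    f.rTensor V₂ z ∈ Submodule.span R (Set.image2 (· ⊗ₜ[R] ·) Set.univ S) := by
  refine (Submodule.span_le (p := (Submodule.span R _).comap (f.rTensor V₂))).2 ?_ hz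
  rintro _ ⟨v, -, s, hs, rfl⟩
  exact Submodule.subset_span (Set.mem_image2_of_mem trivial hs)

theorem lie_eq_rTensor_of_mem_span_image2_tmul {S : Set V₂} {g : L} (hg : ∀ s ∈ S, ⁅g, s⁆ = 0)
    {z : V₁ ⊗[R] V₂} (hz : z ∈ Submodule.span R (Set.image2 (· ⊗ₜ[R] ·) Set.univ S)) :
    ⁅g, z⁆ = (LieModule.toEnd R L V₁ g).rTensor V₂ z := by
  refine (Submodule.span_le (p := LinearMap.eqLocus (LieModule.toEnd R L (V₁ ⊗[R] V₂) g) _)).2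
    ?_ hz
  rintro _ ⟨v, -, s, hs, rfl⟩
  simp [TensorProduct.LieModule.lie_tmul_right, hg s hs]

theorem LieSubmodule.rTensor_mem_of_mem_annActionAlgebra (M : LieSubmodule R L (V₁ ⊗[R] V₂))
    {S : Set V₂} {p : Module.End R V₁} (hp : p ∈ annActionAlgebra R L V₁ S) {z : V₁ ⊗[R] V₂}
    (hzM : z ∈ M) (hzS : z ∈ Submodule.span R (Set.image2 (· ⊗ₜ[R] ·) Set.univ S)) :
    p.rTensor V₂ z ∈ M := by
  let Q := (M : Submodule R (V₁ ⊗[R] V₂)) ⊓ Submodule.span R (Set.image2 (· ⊗ₜ[R] ·) Set.univ S)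
  have hQ : Q ≤ Q.comap (Module.End.rTensorAlgHom R V₁ V₂ p) := by
    refine Submodule.le_comap_of_mem_adjoin _ ?_ hp
    rintro _ ⟨g, hg, rfl⟩ z ⟨hzM, hzS⟩
    refine ⟨?_, rTensor_mem_span_image2_tmul _ hzS⟩
    have h := M.lie_mem (x := g) hzM
    rwa [lie_eq_rTensor_of_mem_span_image2_tmul hg hzS] at h
  exact (hQ ⟨hzM, hzS⟩).1

def LieSubmodule.rightFactor (M : LieSubmodule R L (V₁ ⊗[R] V₂)) : LieSubmodule R L V₂ where
  carrier := {w | ∀ v : V₁, v ⊗ₜ w ∈ M}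
  add_mem' hw hw' v := by simpa [TensorProduct.tmul_add] using M.add_mem (hw v) (hw' v)
  zero_mem' v := by simp
  smul_mem' r w hw v := by simpa [TensorProduct.tmul_smul] using M.smul_mem r (hw v)
  lie_mem {g w} hw v := by
    have h := M.sub_mem (M.lie_mem (x := g) (hw v)) (hw ⁅g, v⁆)
    rwa [TensorProduct.LieModule.lie_tmul_right, add_sub_cancel_left] at h

theorem LieSubmodule.range_rightFactor_le (M : LieSubmodule R L (V₁ ⊗[R] V₂)) :
    LinearMap.range (TensorProduct.map LinearMap.id (M.rightFactor : Submodule R V₂).subtype) ≤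
      (M : Submodule R (V₁ ⊗[R] V₂)) := by
  rw [TensorProduct.range_map_eq_span_tmul, Submodule.span_le]
  rintro _ ⟨v, w, rfl⟩
  exact w.2 v

end TensorLie

theorem LieSubmodule.le_range_rightFactor {F L V₁ V₂ : Type*} [Field F] [LieRing L]
    [LieAlgebra F L] [AddCommGroup V₁] [Module F V₁] [LieRingModule L V₁] [LieModule F L V₁]
    [AddCommGroup V₂] [Module F V₂] [LieRingModule L V₂] [LieModule F L V₂]
    (hdense : ∀ (S : Finset V₂) (f : Module.End F V₁) (s : Finset V₁),
      ∃ p ∈ annActionAlgebra F L V₁ (S : Set V₂), ∀ v ∈ s, p v = f v)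
    (M : LieSubmodule F L (V₁ ⊗[F] V₂)) :
    (M : Submodule F (V₁ ⊗[F] V₂)) ≤
      LinearMap.range
        (TensorProduct.map LinearMap.id (M.rightFactor : Submodule F V₂).subtype) := by
  classical
  intro m hm
  let ℬ := Module.Basis.ofVectorSpace F V₁
  obtain ⟨c, rfl⟩ := TensorProduct.eq_repr_basis_left ℬ m
  have hc : ∀ i ∈ c.support, c i ∈ M.rightFactor := by
    intro i₀ hi₀ x
    obtain ⟨p, hp, hpf⟩ :=
      hdense (c.support.image c) (ℬ.constr F (Pi.single i₀ x)) (c.support.image ℬ)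
    have hpℬ (i) (hi : i ∈ c.support) : p (ℬ i) = (Pi.single i₀ x : _ → V₁) i := by
      rw [hpf _ (Finset.mem_image_of_mem ℬ hi), ℬ.constr_basis]
    have hspan : (c.sum fun i w => ℬ i ⊗ₜ[F] w) ∈
        Submodule.span F (Set.image2 (· ⊗ₜ[F] ·) Set.univ ↑(c.support.image c)) :=
      Submodule.sum_mem _ fun i hi => Submodule.subset_span
        (Set.mem_image2_of_mem trivial (Finset.mem_image_of_mem c hi))
    have h := M.rTensor_mem_of_mem_annActionAlgebra hp hm hspan
    rwa [Finsupp.sum, map_sum, Finset.sum_eq_single_of_mem i₀ hi₀, LinearMap.rTensor_tmul,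
      hpℬ i₀ hi₀, Pi.single_eq_same] at h
    intro i hi hne
    rw [LinearMap.rTensor_tmul, hpℬ i hi, Pi.single_eq_of_ne hne, TensorProduct.zero_tmul]
  rw [TensorProduct.range_map_eq_span_tmul]
  exact Submodule.sum_mem _ fun i hi => Submodule.subset_span ⟨ℬ i, ⟨c i, hc i hi⟩, rfl⟩

theorem SimpleOverAnn.isSimpleModule {L : Type} [LieRing L] [LieAlgebra ℂ L]
    {V₁ : Type} [AddCommGroup V₁] [Module ℂ V₁] [LieRingModule L V₁] [LieModule ℂ L V₁]
    {V₂ : Type} [AddCommGroup V₂] [Module ℂ V₂] [LieRingModule L V₂] [LieModule ℂ L V₂]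
    {S : Finset V₂} (h : SimpleOverAnn L V₁ V₂ S) :
    IsSimpleModule (annActionAlgebra ℂ L V₁ (S : Set V₂)) V₁ :=
  have := h.1
  isSimpleModule_adjoin _ fun W hW => h.2 W fun g hg => hW _ ⟨g, hg, rfl⟩

theorem stmt2 (L : Type) [LieRing L] [LieAlgebra ℂ L]
    (ι : Type) [Countable ι] (b : Module.Basis ι ℂ L)
    (V₁ : Type) [AddCommGroup V₁] [Module ℂ V₁] [LieRingModule L V₁] [LieModule ℂ L V₁]
    (V₂ : Type) [AddCommGroup V₂] [Module ℂ V₂] [LieRingModule L V₂] [LieModule ℂ L V₂]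
    (h : ∀ S : Finset V₂, SimpleOverAnn L V₁ V₂ S)
    (M : LieSubmodule ℂ L (V₁ ⊗[ℂ] V₂)) :
    ∃ V₂' : LieSubmodule ℂ L V₂,
      (M : Submodule ℂ (V₁ ⊗[ℂ] V₂)) =
        LinearMap.range (TensorProduct.map (LinearMap.id (R := ℂ) (M := V₁))
          (V₂' : Submodule ℂ V₂).subtype) := by
  have hsimple (S : Finset V₂) := (h S).isSimpleModule
  have hrank : Module.rank ℂ V₁ < #ℂ := by
    have := hsimple ∅
    rw [Finset.coe_empty, annActionAlgebra_empty b] at this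
    exact (rank_le_aleph0_of_isSimpleModule_adjoin
      (Set.countable_range (LieModule.toEnd ℂ L V₁ ∘ b))).trans_lt
        (mk_complex ▸ aleph0_lt_continuum)
  refine ⟨M.rightFactor,
    le_antisymm (M.le_range_rightFactor fun S f s => ?_) M.range_rightFactor_le⟩
  have hscalar := IsSimpleModule.algebraMap_end_surjective (F := ℂ)
    (A := annActionAlgebra ℂ L V₁ (S : Set V₂)) (V := V₁) (by rwa [lift_id, lift_id])
  obtain ⟨p, hp⟩ := exists_smul_eq_of_algebraMap_end_surjective hscalar f s
  exact ⟨p, p.2, hp⟩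
end

section
/- Let L be a Lie algebra over ℂ with countable basis, and V₁, V₂ simple L-modules. If for every finite subset S ⊂ V₂ the module V₁ remains simple as a module over the annihilator ann_L(S), then the tensor product V₁ ⊗ V₂ is a simple L-module. -/
open scoped TensorProduct

open Polynomial Cardinal

universe u

theorem Polynomial.isUnit_aeval_of_spectrum_eq_empty {K A : Type*} [Field K] [IsAlgClosed K]
    [Ring A] [Algebra K A] {a : A} (ha : spectrum K a = ∅) {p : K[X]} (hp : p ≠ 0) :
    IsUnit (aeval a p) := by
  rcases le_or_gt p.degree 0 with hdeg | hdeg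
  · rw [eq_C_of_degree_le_zero hdeg, aeval_C]
    exact (isUnit_iff_ne_zero.mpr fun h => hp (by rw [eq_C_of_degree_le_zero hdeg, h, C_0])).map _
  · rw [← not_not (a := IsUnit _), ← spectrum.zero_mem_iff K,
      spectrum.map_polynomial_aeval_of_degree_pos a p hdeg, ha, Set.image_empty]
    exact Set.notMem_empty 0

namespace Module.End

variable {K V : Type u} [Field K] [AddCommGroup V] [Module K V]

def ActsIrreducibly (T : Set (Module.End K V)) : Prop :=
  ∀ W : Submodule K V, (∀ a ∈ T, ∀ w ∈ W, a w ∈ W) → W = ⊥ ∨ W = ⊤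

theorem eq_zero_or_isUnit_of_mem_centralizer {T : Set (Module.End K V)} (hT : ActsIrreducibly T)
    {ψ : Module.End K V} (hψ : ψ ∈ Subalgebra.centralizer K T) : ψ = 0 ∨ IsUnit ψ := by
  rw [Subalgebra.mem_centralizer_iff] at hψ
  have hker : LinearMap.ker ψ = ⊥ ∨ LinearMap.ker ψ = ⊤ := hT _ fun a ha w hw => by
    rw [LinearMap.mem_ker] at hw ⊢
    rw [← mul_apply, ← hψ a ha, mul_apply, hw, map_zero]
  have hrange : LinearMap.range ψ = ⊥ ∨ LinearMap.range ψ = ⊤ := hT _ fun a ha _ ⟨x, hx⟩ =>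
    ⟨a x, by rw [← hx, ← mul_apply, ← hψ a ha, mul_apply]⟩
  rcases hker with hker | hker
  · rcases hrange with hrange | hrange
    · exact .inl (LinearMap.range_eq_bot.mp hrange)
    · exact .inr ((isUnit_iff ψ).mpr
        ⟨LinearMap.ker_eq_bot.mp hker, LinearMap.range_eq_top.mp hrange⟩)
  · exact .inl (LinearMap.ker_eq_top.mp hker)

/-- If `φ` has empty spectrum, `p / q ↦ p(φ) q(φ)⁻¹ v` embeds `K(X)` into `V`, and the
`(X - a)⁻¹`, `a ∈ K`, are linearly independent in `K(X)`. -/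
theorem cardinal_le_rank_of_spectrum_eq_empty [IsAlgClosed K] [Nontrivial V]
    {φ : Module.End K V} (hφ : spectrum K φ = ∅) : #K ≤ Module.rank K V := by
  let E := FractionRing K[X]
  let f : K[X] →+* Module.End K V := (aeval φ : K[X] →ₐ[K] Module.End K V).toRingHom
  have hf : ∀ p : nonZeroDivisors K[X], IsUnit (f p) := fun p =>
    isUnit_aeval_of_spectrum_eq_empty hφ (nonZeroDivisors.coe_ne_zero p)
  let Ψ : E →+* Module.End K V := OreLocalization.universalHom f
    (IsUnit.liftRight (f.toMonoidHom.comp (nonZeroDivisors K[X]).subtype) hf) fun _ => rfl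
  have hΨ : ∀ c : K, Ψ (algebraMap K E c) = algebraMap K _ c := fun c =>
    (OreLocalization.universalHom_commutes (r := C c) ..).trans (aeval_C φ c)
  obtain ⟨v, hv⟩ := exists_ne (0 : V)
  let ℓ : E →ₗ[K] V :=
    { toFun r := Ψ r v
      map_add' r s := by simp
      map_smul' c r := by simp [Algebra.smul_def, hΨ] }
  have hℓ : Function.Injective ℓ := by
    rw [← LinearMap.ker_eq_bot, LinearMap.ker_eq_bot']
    intro r hr
    by_contra hr0
    have hΨr := (isUnit_iff _).mp ((isUnit_iff_ne_zero.mpr hr0).map Ψ)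
    exact hv (hΨr.1 (hr.trans (map_zero _).symm))
  have hX : Transcendental K (algebraMap K[X] E X) :=
    (transcendental_algebraMap_iff (IsFractionRing.injective K[X] E)).2 (transcendental_X K)
  exact hX.linearIndependent_sub_inv.cardinal_le_rank.trans (ℓ.rank_le_of_injective hℓ)

theorem centralizer_eq_bot_of_rank_lt [IsAlgClosed K] [Nontrivial V]
    (hrank : Module.rank K V < #K) {T : Set (Module.End K V)} (hT : ActsIrreducibly T) :
    Subalgebra.centralizer K T = ⊥ := by
  refine eq_bot_iff.mpr fun φ hφ => ?_
  obtain ⟨μ, hμ⟩ : (spectrum K φ).Nonempty := Set.nonempty_iff_ne_empty.mpr fun h =>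
    (cardinal_le_rank_of_spectrum_eq_empty h).not_gt hrank
  have hμφ : algebraMap K _ μ - φ ∈ Subalgebra.centralizer K T :=
    Subalgebra.sub_mem _ (Subalgebra.algebraMap_mem _ μ) hφ
  rcases eq_zero_or_isUnit_of_mem_centralizer hT hμφ with h | h
  · exact Algebra.mem_bot.mpr ⟨μ, sub_eq_zero.mp h⟩
  · exact absurd h hμ

theorem exists_apply_eq_smul_apply {κ : Type*} {T : Set (Module.End K V)}
    (hT : ActsIrreducibly T) (hcent : Subalgebra.centralizer K T = ⊥)
    {W : Submodule K (κ →₀ V)} (hW : ∀ a ∈ T, ∀ f ∈ W, Finsupp.mapRange.linearMap a f ∈ W)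
    {i₀ : κ} (hi₀ : ∀ f ∈ W, f i₀ = 0 → f = 0) :
    ∃ c : κ → K, ∀ f ∈ W, ∀ i, f i = c i • f i₀ := by
  let π : W →ₗ[K] V := Finsupp.lapply i₀ ∘ₗ W.subtype
  have hπ : Function.Injective π := by
    rw [← LinearMap.ker_eq_bot, LinearMap.ker_eq_bot']
    exact fun f hf => Subtype.ext (hi₀ f f.2 hf)
  rcases hT (LinearMap.range π) fun a ha _ ⟨f, hf⟩ => ⟨⟨_, hW a ha f f.2⟩, by simp [π, ← hf]⟩
    with hbot | htop
  · refine ⟨0, fun f hf i => ?_⟩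
    have : π ⟨f, hf⟩ = 0 := LinearMap.range_eq_bot.mp hbot ▸ rfl
    simp [hi₀ f hf this]
  let e : W ≃ₗ[K] V := .ofBijective π ⟨hπ, LinearMap.range_eq_top.mp htop⟩
  have he : ∀ f : W, e.symm (f.1 i₀) = f := fun f => e.symm_apply_eq.mpr rfl
  have hcomm : ∀ i, Finsupp.lapply i ∘ₗ W.subtype ∘ₗ e.symm.toLinearMap ∈
      Subalgebra.centralizer K T := by
    refine fun i => (Subalgebra.mem_centralizer_iff K).mpr fun a ha => ?_
    ext x
    obtain ⟨f, rfl⟩ := e.surjective x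
    have hae : a (e f) = e ⟨_, hW a ha f f.2⟩ := rfl
    simp [hae]
  choose c hc using fun i => Algebra.mem_bot.mp (hcent ▸ hcomm i)
  refine ⟨c, fun f hf i => ?_⟩
  have := LinearMap.congr_fun (hc i) (f i₀)
  simp only [LinearMap.comp_apply, LinearEquiv.coe_coe, he ⟨f, hf⟩] at this
  simpa [Algebra.algebraMap_eq_smul_one] using this.symm

end Module.End

section Lie

variable {K L V₁ V₂ : Type u} [Field K] [LieRing L] [LieAlgebra K L]
  [AddCommGroup V₁] [Module K V₁] [LieRingModule L V₁] [LieModule K L V₁]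
  [AddCommGroup V₂] [Module K V₂] [LieRingModule L V₂] [LieModule K L V₂]

open LieModule TensorProduct

variable (K L V₁) in
def annihilatorEnd (S : Finset V₂) : Set (Module.End K V₁) :=
  toEnd K L V₁ '' {g : L | ∀ s ∈ S, ⁅g, s⁆ = 0}

theorem SimpleOverAnn.actsIrreducibly {L V₁ V₂ : Type} [LieRing L] [LieAlgebra ℂ L]
    [AddCommGroup V₁] [Module ℂ V₁] [LieRingModule L V₁] [LieModule ℂ L V₁]
    [AddCommGroup V₂] [Module ℂ V₂] [LieRingModule L V₂] [LieModule ℂ L V₂] {S : Finset V₂}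
    (h : SimpleOverAnn L V₁ V₂ S) : Module.End.ActsIrreducibly (annihilatorEnd ℂ L V₁ S) :=
  fun W hW => h.2 W fun g hg w hw => hW _ ⟨g, hg, rfl⟩ w hw

/-- `V₁` is the image of `a ↦ a v` on the subalgebra of `End V₁` generated by the countable set
`toEnd '' s`. -/
theorem LieModule.rank_le_aleph0_of_isSimpleOrder [IsSimpleOrder (LieSubmodule K L V₁)]
    {s : Set L} (hs : s.Countable) (hspan : Submodule.span K s = ⊤) :
    Module.rank K V₁ ≤ ℵ₀ := by
  have : Nontrivial V₁ := (LieSubmodule.nontrivial_iff K L V₁).mp inferInstance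
  obtain ⟨v, hv⟩ := exists_ne (0 : V₁)
  let A := Algebra.adjoin K (toEnd K L V₁ '' s)
  have hA : ∀ g : L, toEnd K L V₁ g ∈ A := fun g => Algebra.span_le_adjoin K _ <|
    Submodule.apply_mem_span_image_of_mem_span (toEnd K L V₁ : L →ₗ[K] Module.End K V₁)
      (hspan ▸ Submodule.mem_top)
  let ev : A →ₗ[K] V₁ := LinearMap.applyₗ v ∘ₗ A.val.toLinearMap
  let M : LieSubmodule K L V₁ :=
    { LinearMap.range ev with
      lie_mem := by
        rintro g _ ⟨a, rfl⟩
        exact ⟨⟨toEnd K L V₁ g, hA g⟩ * a, rfl⟩ }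
  have hM : M = ⊤ := (IsSimpleOrder.eq_bot_or_eq_top M).resolve_left fun h =>
    hv ((LieSubmodule.eq_bot_iff M).mp h v ⟨1, rfl⟩)
  calc Module.rank K V₁ = Module.rank K (LinearMap.range ev) := by
        rw [show LinearMap.range ev = ⊤ from congr_arg LieSubmodule.toSubmodule hM, rank_top]
    _ ≤ Module.rank K A := rank_range_le ev
    _ ≤ max #(toEnd K L V₁ '' s) ℵ₀ := Algebra.rank_adjoin_le _
    _ ≤ ℵ₀ := max_le (hs.image _).le_aleph0 le_rfl

theorem lie_equivFinsuppOfBasisRight_symm {κ : Type*} [DecidableEq κ] (β : Module.Basis κ K V₂)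
    {F : Set κ} {f : κ →₀ V₁} (hf : f ∈ Finsupp.supported V₁ K F) {g : L}
    (hg : ∀ i ∈ F, ⁅g, β i⁆ = 0) :
    ⁅g, (equivFinsuppOfBasisRight β).symm f⁆ =
      (equivFinsuppOfBasisRight β).symm (Finsupp.mapRange.linearMap (toEnd K L V₁ g) f) := by
  rw [equivFinsuppOfBasisRight_symm_apply, equivFinsuppOfBasisRight_symm_apply,
    Finsupp.mapRange.linearMap_apply, Finsupp.sum_mapRange_index fun i => zero_tmul V₁ (β i),
    Finsupp.sum, Finsupp.sum, ← toEnd_apply_apply K, map_sum]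
  refine Finset.sum_congr rfl fun i hi => ?_
  rw [toEnd_apply_apply, LieModule.lie_tmul_right, hg i ((Finsupp.mem_supported K f).mp hf hi),
    tmul_zero, add_zero, toEnd_apply_apply]

noncomputable def LieSubmodule.supportedCoords {κ : Type*} [DecidableEq κ]
    (U : LieSubmodule K L (V₁ ⊗[K] V₂)) (β : Module.Basis κ K V₂) (F : Set κ) :
    Submodule K (κ →₀ V₁) :=
  Finsupp.supported V₁ K F ⊓ U.toSubmodule.comap (equivFinsuppOfBasisRight β).symm.toLinearMap

theorem LieSubmodule.mapRange_toEnd_mem_supportedCoords {κ : Type*} [DecidableEq κ]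
    (U : LieSubmodule K L (V₁ ⊗[K] V₂)) (β : Module.Basis κ K V₂) {F : Set κ} {g : L}
    (hg : ∀ i ∈ F, ⁅g, β i⁆ = 0) {f : κ →₀ V₁} (hf : f ∈ U.supportedCoords β F) :
    Finsupp.mapRange.linearMap (toEnd K L V₁ g) f ∈ U.supportedCoords β F := by
  obtain ⟨hfF, hfU⟩ := Submodule.mem_inf.mp hf
  have hsupp := (Finset.coe_subset.mpr (Finsupp.support_mapRange (hf := map_zero (toEnd K L V₁ g))
    (g := f))).trans ((Finsupp.mem_supported K f).mp hfF)
  refine ⟨(Finsupp.mem_supported K _).mpr hsupp, ?_⟩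
  change (equivFinsuppOfBasisRight β).symm _ ∈ U
  rw [← lie_equivFinsuppOfBasisRight_symm β hfF hg]
  exact U.lie_mem hfU

theorem LieSubmodule.exists_tmul_mem_of_ne_bot
    (hT : ∀ S : Finset V₂, Module.End.ActsIrreducibly (annihilatorEnd K L V₁ S))
    (hD : ∀ S : Finset V₂, Subalgebra.centralizer K (annihilatorEnd K L V₁ S) = ⊥)
    {U : LieSubmodule K L (V₁ ⊗[K] V₂)} (hU : U ≠ ⊥) :
    ∃ (x : V₁) (y : V₂), x ≠ 0 ∧ y ≠ 0 ∧ x ⊗ₜ y ∈ U := by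
  classical
  let β := Module.Basis.ofVectorSpace K V₂
  let e := equivFinsuppOfBasisRight (M := V₁) β
  obtain ⟨t, ⟨htU, ht0⟩, hmin⟩ := (measure fun t => (e t).support.card).wf.has_min
    {t | t ∈ U ∧ t ≠ 0} (by simpa [LieSubmodule.eq_bot_iff, Set.Nonempty] using hU)
  obtain ⟨i₀, hi₀⟩ : (e t).support.Nonempty :=
    Finsupp.support_nonempty_iff.mpr ((LinearEquiv.map_ne_zero_iff e).mpr ht0)
  let F := (e t).support
  let W := U.supportedCoords β F
  have hW : ∀ a ∈ annihilatorEnd K L V₁ (F.image β), ∀ f ∈ W,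
      Finsupp.mapRange.linearMap a f ∈ W := by
    rintro _ ⟨g, hg, rfl⟩ f hf
    exact U.mapRange_toEnd_mem_supportedCoords β
      (fun i hi => hg _ (Finset.mem_image_of_mem β hi)) hf
  have hWi₀ : ∀ f ∈ W, f i₀ = 0 → f = 0 := by
    rintro f ⟨hfF, hfU⟩ hf0
    by_contra hf
    refine hmin (e.symm f) ⟨hfU, by simpa using hf⟩ ?_
    change (e (e.symm f)).support.card < F.card
    rw [e.apply_symm_apply]
    exact Finset.card_lt_card <| (Finset.ssubset_iff_of_subset
      ((Finsupp.mem_supported K f).mp hfF)).mpr ⟨i₀, hi₀, by simpa using hf0⟩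
  obtain ⟨c, hc⟩ := Module.End.exists_apply_eq_smul_apply (hT _) (hD _) hW hWi₀
  have hetW : e t ∈ W :=
    ⟨(Finsupp.mem_supported K _).mpr subset_rfl, show e.symm (e t) ∈ U by rwa [e.symm_apply_apply]⟩
  have ht : t = e t i₀ ⊗ₜ ∑ i ∈ F, c i • β i := calc
    t = e.symm (e t) := (e.symm_apply_apply t).symm
    _ = ∑ i ∈ F, e t i ⊗ₜ β i := equivFinsuppOfBasisRight_symm_apply β (e t)
    _ = ∑ i ∈ F, e t i₀ ⊗ₜ (c i • β i) :=
      Finset.sum_congr rfl fun i _ => by rw [hc _ hetW i, smul_tmul]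
    _ = _ := (tmul_sum _ _ _).symm
  refine ⟨e t i₀, _, Finsupp.mem_support_iff.mp hi₀, fun hy => ht0 ?_, ht ▸ htU⟩
  rw [ht, hy, tmul_zero]

theorem LieSubmodule.tmul_mem_of_tmul_mem {y : V₂}
    (hT : Module.End.ActsIrreducibly (annihilatorEnd K L V₁ {y}))
    {U : LieSubmodule K L (V₁ ⊗[K] V₂)} {x : V₁} (hx : x ≠ 0) (hxy : x ⊗ₜ y ∈ U) (x' : V₁) :
    x' ⊗ₜ y ∈ U := by
  let W : Submodule K V₁ := U.toSubmodule.comap ((TensorProduct.mk K V₁ V₂).flip y)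
  have hW : W = ⊤ := by
    refine (hT W ?_).resolve_left fun h => hx ((Submodule.eq_bot_iff W).mp h x hxy)
    rintro _ ⟨g, hg, rfl⟩ w hw
    have : ⁅g, w ⊗ₜ[K] y⁆ = ⁅g, w⁆ ⊗ₜ y := by
      rw [LieModule.lie_tmul_right, hg y (Finset.mem_singleton_self y), tmul_zero, add_zero]
    change toEnd K L V₁ g w ⊗ₜ y ∈ U
    rw [toEnd_apply_apply, ← this]
    exact U.lie_mem hw
  have : x' ∈ W := hW ▸ Submodule.mem_top
  exact this

theorem LieSubmodule.eq_top_of_forall_tmul_mem [IsSimpleOrder (LieSubmodule K L V₂)]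
    {U : LieSubmodule K L (V₁ ⊗[K] V₂)} {y : V₂} (hy : y ≠ 0) (hU : ∀ x : V₁, x ⊗ₜ y ∈ U) :
    U = ⊤ := by
  let W : LieSubmodule K L V₂ :=
    { toSubmodule := ⨅ x : V₁, U.toSubmodule.comap (TensorProduct.mk K V₁ V₂ x)
      lie_mem := fun {g y'} hy' => by
        have hy' := (Submodule.mem_iInf _).mp hy'
        refine (Submodule.mem_iInf _).mpr fun x => ?_
        have := U.sub_mem (U.lie_mem (x := g) (hy' x)) (hy' ⁅g, x⁆)
        rwa [mk_apply, mk_apply, LieModule.lie_tmul_right, add_sub_cancel_left] at this }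
  have hW : W = ⊤ := (IsSimpleOrder.eq_bot_or_eq_top W).resolve_left fun h =>
    hy ((LieSubmodule.eq_bot_iff W).mp h y (Submodule.mem_iInf _ |>.mpr hU))
  rw [← LieSubmodule.toSubmodule_eq_top, eq_top_iff, ← span_tmul_eq_top, Submodule.span_le]
  rintro _ ⟨x, y', rfl⟩
  have : y' ∈ W := hW ▸ LieSubmodule.mem_top y'
  exact (Submodule.mem_iInf _).mp this x

end Lie

theorem stmt3 (L : Type) [LieRing L] [LieAlgebra ℂ L]
    (ι : Type) [Countable ι] (b : Module.Basis ι ℂ L)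
    (V₁ : Type) [AddCommGroup V₁] [Module ℂ V₁] [LieRingModule L V₁] [LieModule ℂ L V₁]
    (V₂ : Type) [AddCommGroup V₂] [Module ℂ V₂] [LieRingModule L V₂] [LieModule ℂ L V₂]
    [IsSimpleOrder (LieSubmodule ℂ L V₁)] [IsSimpleOrder (LieSubmodule ℂ L V₂)]
    (h : ∀ S : Finset V₂, SimpleOverAnn L V₁ V₂ S) :
    IsSimpleOrder (LieSubmodule ℂ L (V₁ ⊗[ℂ] V₂)) := by
  have hT (S : Finset V₂) := (h S).actsIrreducibly
  have : Nontrivial V₁ := (h ∅).1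
  have : Nontrivial V₂ := (LieSubmodule.nontrivial_iff ℂ L V₂).mp inferInstance
  have hrank : Module.rank ℂ V₁ < #ℂ := by
    rw [mk_complex]
    exact (LieModule.rank_le_aleph0_of_isSimpleOrder (Set.countable_range b) b.span_eq).trans_lt
      aleph0_lt_continuum
  refine { toNontrivial := (LieSubmodule.nontrivial_iff ℂ L _).mpr inferInstance,
           eq_bot_or_eq_top := fun U => or_iff_not_imp_left.mpr fun hU => ?_ }
  obtain ⟨x, y, hx, hy, hxy⟩ := U.exists_tmul_mem_of_ne_bot hT
    (fun S => Module.End.centralizer_eq_bot_of_rank_lt hrank (hT S)) hU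
  exact U.eq_top_of_forall_tmul_mem hy (U.tmul_mem_of_tmul_mem (hT {y}) hx hxy)
end

section
/- Let L be a Lie algebra over ℂ with countable basis, V₁ a simple L-module and V₂ an L-module. Suppose ann_L(v) + ann_L(S) = L for every v ∈ V₁ and every finite subset S ⊂ V₂. Then for every finite subset S ⊂ V₂, V₁ is simple as an ann_L(S)-module. -/
section

variable {R L M : Type*} [CommRing R] [LieRing L] [AddCommGroup M] [Module R M]
  [LieRingModule L M]

theorem Submodule.lie_mem_of_forall_eq_add {W : Submodule R M} {A : Set L}
    (hA : ∀ z ∈ A, ∀ w ∈ W, ⁅z, w⁆ ∈ W)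
    (hsplit : ∀ w ∈ W, ∀ x : L, ∃ y z : L, x = y + z ∧ ⁅y, w⁆ = 0 ∧ z ∈ A)
    (x : L) {w : M} (hw : w ∈ W) : ⁅x, w⁆ ∈ W := by
  obtain ⟨y, z, rfl, hy, hz⟩ := hsplit w hw x
  rw [add_lie, hy, zero_add]
  exact hA z hz w hw

theorem Submodule.eq_bot_or_eq_top_of_lie_mem [IsSimpleOrder (LieSubmodule R L M)]
    (W : Submodule R M) (hW : ∀ (x : L) {w : M}, w ∈ W → ⁅x, w⁆ ∈ W) : W = ⊥ ∨ W = ⊤ :=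
  let W' : LieSubmodule R L M := { W with lie_mem := hW _ }
  (IsSimpleOrder.eq_bot_or_eq_top W').imp (LieSubmodule.toSubmodule_eq_bot W').mpr
    (LieSubmodule.toSubmodule_eq_top W').mpr

end

theorem stmt4_general (L : Type) [LieRing L] [LieAlgebra ℂ L]
    (V₁ : Type) [AddCommGroup V₁] [Module ℂ V₁] [LieRingModule L V₁] [LieModule ℂ L V₁]
    (V₂ : Type) [AddCommGroup V₂] [Module ℂ V₂] [LieRingModule L V₂] [LieModule ℂ L V₂]
    [IsSimpleOrder (LieSubmodule ℂ L V₁)]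
    -- `ann_L(v) + ann_L(S) = L` for every `v ∈ V₁` and every finite `S ⊆ V₂`:
    (h : ∀ (v : V₁) (S : Finset V₂) (x : L), ∃ y z : L, x = y + z ∧
      ⁅y, v⁆ = (0 : V₁) ∧ ∀ s ∈ S, ⁅z, s⁆ = (0 : V₂)) :
    ∀ S : Finset V₂, SimpleOverAnn L V₁ V₂ S := by
  intro S
  refine ⟨LieModule.nontrivial_of_isIrreducible ℂ L V₁, fun W hW => ?_⟩
  have hL : ∀ (x : L) {w : V₁}, w ∈ W → ⁅x, w⁆ ∈ W :=
    W.lie_mem_of_forall_eq_add (A := {z | ∀ s ∈ S, ⁅z, s⁆ = (0 : V₂)}) hW (fun w _ => h w S)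
  exact W.eq_bot_or_eq_top_of_lie_mem hL

theorem stmt4 (L : Type) [LieRing L] [LieAlgebra ℂ L]
    (ι : Type) [Countable ι] (b : Module.Basis ι ℂ L)
    (V₁ : Type) [AddCommGroup V₁] [Module ℂ V₁] [LieRingModule L V₁] [LieModule ℂ L V₁]
    (V₂ : Type) [AddCommGroup V₂] [Module ℂ V₂] [LieRingModule L V₂] [LieModule ℂ L V₂]
    [IsSimpleOrder (LieSubmodule ℂ L V₁)]
    -- `ann_L(v) + ann_L(S) = L` for every `v ∈ V₁` and every finite `S ⊆ V₂`:
    (h : ∀ (v : V₁) (S : Finset V₂) (x : L), ∃ y z : L, x = y + z ∧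
      ⁅y, v⁆ = (0 : V₁) ∧ ∀ s ∈ S, ⁅z, s⁆ = (0 : V₂)) :
    ∀ S : Finset V₂, SimpleOverAnn L V₁ V₂ S :=
  stmt4_general L V₁ V₂ h
end
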